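/- Let P = (P_{i,j})_{i,j≥0} be the matrix of the U_5-operator Σ_{i=1}^5 ||_k δ_i on Q_5⟨z⟩ in the monomial basis, where the δ_i are as in the paper. Then P_{i,j} = 0 unless i ≡ j (mod 4). -/

import Mathlib

/-!
Conjugating by `diag(ν, 1)` acts on the generating series as the substitution `x ↦ -ν x`,
`y ↦ ν y`. Since `ν² = -1` this conjugation fixes `δ₁` and permutes `δ₂ → δ₄ → δ₅ → δ₃ → δ₂`,
so the generating series of `P` is invariant under the substitution. Comparing coefficients gives
`P_{i,j} = ν^j (-ν)^i P_{i,j} = ν^(j+3i) P_{i,j}`, and `ν` is a primitive fourth root of unity,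
so `P_{i,j} = 0` unless `4 ∣ j + 3i`, i.e. `i ≡ j (mod 4)`.
-/

open PowerSeries

instance : Fact (Nat.Prime 5) := ⟨by norm_num⟩

/-- `H_γ(x,y) = Σ_j y^j (cx+d)^{k-2}((ax+b)/(cx+d))^j`, the generating series of the weight-`k`
action of `γ = (a b; c d)` on `ℚ₅⟨z⟩` in the monomial basis. -/
noncomputable def genSeries (a b c d : ℚ_[5]) (k : ℕ) : PowerSeries (PowerSeries ℚ_[5]) :=
  PowerSeries.mk fun j =>
    (PowerSeries.C (R := ℚ_[5]) c * PowerSeries.X + PowerSeries.C (R := ℚ_[5]) d) ^ (k - 2) *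
      ((PowerSeries.C (R := ℚ_[5]) a * PowerSeries.X + PowerSeries.C (R := ℚ_[5]) b) *
        (PowerSeries.C (R := ℚ_[5]) c * PowerSeries.X + PowerSeries.C (R := ℚ_[5]) d)⁻¹) ^ j

/-- The generating series of the `U₅`-operator `Σ_{i=1}^5 ‖_k δ_i`, where
`δ₁ = diag(-2+ν, -2-ν)` and, with `α = (1+3ν)/2`: `δ₂ = (1-α, α; α-1, α)`,
`δ₃ = (1-α, -αν; (α-1)ν, α)`, `δ₄ = (1-α, αν; (1-α)ν, α)`, `δ₅ = (1-α, -α; 1-α, α)`. -/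
noncomputable def U5Series (ν : ℚ_[5]) (k : ℕ) : PowerSeries (PowerSeries ℚ_[5]) :=
  genSeries (-2 + ν) 0 0 (-2 - ν) k +
  genSeries (1 - (1 + 3*ν)/2) ((1 + 3*ν)/2) ((1 + 3*ν)/2 - 1) ((1 + 3*ν)/2) k +
  genSeries (1 - (1 + 3*ν)/2) (-((1 + 3*ν)/2 * ν)) (((1 + 3*ν)/2 - 1) * ν) ((1 + 3*ν)/2) k +
  genSeries (1 - (1 + 3*ν)/2) ((1 + 3*ν)/2 * ν) ((1 - (1 + 3*ν)/2) * ν) ((1 + 3*ν)/2) k +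
  genSeries (1 - (1 + 3*ν)/2) (-((1 + 3*ν)/2)) (1 - (1 + 3*ν)/2) ((1 + 3*ν)/2) k

namespace PowerSeries

@[simp]
theorem rescale_C {R : Type*} [CommSemiring R] (r a : R) : rescale r (C a) = C a := by
  ext n
  rcases n with _ | n <;> simp [coeff_C]

theorem rescale_inv {k : Type*} [Field k] (r : k) (f : k⟦X⟧) :
    rescale r f⁻¹ = (rescale r f)⁻¹ := by
  have hconst : constantCoeff (rescale r f) = constantCoeff f := by
    rw [← coeff_zero_eq_constantCoeff_apply, coeff_rescale]
    simp
  by_cases hf : constantCoeff f = 0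
  · rw [inv_eq_zero.mpr hf, inv_eq_zero.mpr (hconst ▸ hf), map_zero]
  · rw [eq_comm, inv_eq_iff_mul_eq_one (hconst ▸ hf), ← map_mul, PowerSeries.inv_mul_cancel f hf,
      map_one]

theorem coeff_eq_zero_of_eq_C_mul_rescale {R : Type*} [CommRing R] [IsDomain R] {f : R⟦X⟧}
    {r s : R} (hf : f = C s * rescale r f) {i : ℕ} (hi : s * r ^ i ≠ 1) : coeff i f = 0 := by
  have h : coeff i f = s * r ^ i * coeff i f := by
    conv_lhs => rw [hf]
    rw [coeff_C_mul, coeff_rescale, mul_assoc]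
  have h' : (s * r ^ i - 1) * coeff i f = 0 := by linear_combination -h
  exact (mul_eq_zero.mp h').resolve_left (sub_ne_zero.mpr hi)

end PowerSeries

theorem isPrimitiveRoot_four_of_sq_eq_neg_one {M : Type*} [CommMonoid M] [HasDistribNeg M] {ν : M}
    (hν : ν ^ 2 = -1) (h : (-1 : M) ≠ 1) : IsPrimitiveRoot ν 4 := by
  have hord : orderOf ν = 4 :=
    orderOf_eq_prime_pow (p := 2) (n := 1) (by rwa [pow_one, hν])
      (by rw [show 2 ^ (1 + 1) = 2 * 2 by rfl, pow_mul, hν, neg_one_sq])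
  exact hord ▸ IsPrimitiveRoot.orderOf ν

/-- For `r s = 1`, conjugation by `diag(s, 1)` turns `(a b; c d)` into `(a, b s; c r, d)`; on
generating series it is the substitution `x ↦ r x`, `y ↦ s y`. -/
theorem coeff_genSeries_conj (a b c d r s : ℚ_[5]) (hrs : r * s = 1) (k j : ℕ) :
    coeff j (genSeries a (b * s) (c * r) d k) =
      C (s ^ j) * rescale r (coeff j (genSeries a b c d k)) := by
  simp only [genSeries, coeff_mk, map_mul, map_pow, map_add, rescale_inv, rescale_X, rescale_C]
  have hC : C r * C s = 1 := by rw [← map_mul, hrs, map_one]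
  have hnum : C a * X + C b * C s = C s * (C a * (C r * X) + C b) := by
    linear_combination (-(C a * X)) * hC
  rw [hnum, mul_assoc (C c), mul_assoc (C s), mul_pow]
  ring

theorem coeff_U5Series_eq_C_mul_rescale (ν : ℚ_[5]) (hν : ν ^ 2 = -1) (k j : ℕ) :
    coeff j (U5Series ν k) = C (ν ^ j) * rescale (-ν) (coeff j (U5Series ν k)) := by
  have hrs : -ν * ν = 1 := by linear_combination -hν
  have conj : ∀ a b c d b' c' : ℚ_[5], b' = b * ν → c' = c * -ν →
      C (ν ^ j) * rescale (-ν) (coeff j (genSeries a b c d k)) = coeff j (genSeries a b' c' d k) := by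
    rintro a b c d _ _ rfl rfl
    exact (coeff_genSeries_conj a b c d (-ν) ν hrs k j).symm
  simp only [U5Series, map_add, mul_add]
  set α : ℚ_[5] := (1 + 3 * ν) / 2
  rw [conj (-2 + ν) 0 0 (-2 - ν) 0 0 (by ring) (by ring),
    conj (1 - α) α (α - 1) α (α * ν) ((1 - α) * ν) (by ring) (by ring),
    conj (1 - α) (-(α * ν)) ((α - 1) * ν) α α (α - 1)
      (by linear_combination α * hν) (by linear_combination (α - 1) * hν),
    conj (1 - α) (α * ν) ((1 - α) * ν) α (-α) (1 - α)
      (by linear_combination -α * hν) (by linear_combination (1 - α) * hν),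
    conj (1 - α) (-α) (1 - α) α (-(α * ν)) ((α - 1) * ν) (by ring) (by ring)]
  abel

theorem U5_matrix_entry_vanishes_general (ν : ℚ_[5]) (hν : ν ^ 2 = -1) (k : ℕ)
    (i j : ℕ) (hij : ¬ i ≡ j [MOD 4]) :
    PowerSeries.coeff (R := ℚ_[5]) i (PowerSeries.coeff (R := PowerSeries ℚ_[5]) j (U5Series ν k)) = 0 := by
  have hprim : IsPrimitiveRoot ν 4 := isPrimitiveRoot_four_of_sq_eq_neg_one hν (by norm_num)
  refine coeff_eq_zero_of_eq_C_mul_rescale (coeff_U5Series_eq_C_mul_rescale ν hν k j) ?_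
  have hneg : -ν = ν ^ 3 := by linear_combination -ν * hν
  rw [hneg, ← pow_mul, ← pow_add, Ne, hprim.pow_eq_one_iff_dvd]
  unfold Nat.ModEq at hij
  omega

/-- The matrix `P = (P_{i,j})` of the `U₅`-operator on `ℚ₅⟨z⟩` in the monomial basis satisfies
`P_{i,j} = 0` unless `i ≡ j (mod 4)`. -/
theorem U5_matrix_entry_vanishes (ν : ℚ_[5]) (hν : ν ^ 2 = -1) (k : ℕ) (hk : 2 ≤ k)
    (i j : ℕ) (hij : ¬ i ≡ j [MOD 4]) :
    PowerSeries.coeff (R := ℚ_[5]) i (PowerSeries.coeff (R := PowerSeries ℚ_[5]) j (U5Series ν k)) = 0 :=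
  U5_matrix_entry_vanishes_general ν hν k i j hij
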